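/- arXiv:1310.7093 — 3 statements merged into one kernel-verified Lean document; each statement's English description precedes it below -/
import Mathlib

section
/- Every language over a countably infinite name alphabet N that is a countable union of pattern languages, all of whose constants lie in a common finite set F ⊆ N, is invariant under every permutation π : Equiv.Perm N fixing F pointwise: the image of the language under w ↦ w.map π equals the language. (This is the schematic-word form of the proposition that all nominal regular languages are closed under α-equivalence.) -/
/-- Freshness conditions over `k` positions with names from `N`: finite
conjunctions (`tru` is the empty conjunction) and disjunctions of atomic
constraints `x i ≠ x j` and `x i ≠ n`. -/
inductive Fresh (N : Type) (k : ℕ) : Type where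
  | tru : Fresh N k
  | neVar : Fin k → Fin k → Fresh N k
  | neConst : Fin k → N → Fresh N k
  | and : Fresh N k → Fresh N k → Fresh N k
  | or : Fresh N k → Fresh N k → Fresh N k

/-- Satisfaction of a freshness condition by an assignment of names. -/
def Fresh.sat {N : Type} {k : ℕ} : Fresh N k → (Fin k → N) → Prop
  | .tru, _ => True
  | .neVar i j, x => x i ≠ x j
  | .neConst i n, x => x i ≠ n
  | .and φ ψ, x => φ.sat x ∧ ψ.sat x
  | .or φ ψ, x => φ.sat x ∨ ψ.sat x

/-- The set of constant names occurring in a freshness condition. -/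
def Fresh.consts {N : Type} {k : ℕ} : Fresh N k → Set N
  | .tru => ∅
  | .neVar _ _ => ∅
  | .neConst _ n => {n}
  | .and φ ψ => φ.consts ∪ ψ.consts
  | .or φ ψ => φ.consts ∪ ψ.consts

/-- The pattern language of a freshness condition: all words of length `k`
whose entries satisfy `φ`. -/
def patLang {N : Type} (k : ℕ) (φ : Fresh N k) : Set (List N) :=
  { w | ∃ x : Fin k → N, w = List.ofFn x ∧ φ.sat x }

/-! Every atomic constraint is a disequality, so an injective map fixing the constants of `φ`
preserves and reflects `φ.sat`; hence a permutation and its inverse both map each pattern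
language into itself, and the image is the whole language. -/

open Function

section

variable {N : Type} {k : ℕ}

theorem Fresh.sat_comp_iff {f : N → N} (hf : Injective f) (φ : Fresh N k)
    (hφ : ∀ n ∈ φ.consts, f n = n) (x : Fin k → N) : φ.sat (f ∘ x) ↔ φ.sat x := by
  induction φ with
  | tru => exact Iff.rfl
  | neVar i j => exact hf.ne_iff
  | neConst i n => exact hf.ne_iff' (hφ n rfl)
  | and φ ψ ihφ ihψ =>
    exact and_congr (ihφ fun n hn => hφ n (Or.inl hn)) (ihψ fun n hn => hφ n (Or.inr hn))
  | or φ ψ ihφ ihψ =>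
    exact or_congr (ihφ fun n hn => hφ n (Or.inl hn)) (ihψ fun n hn => hφ n (Or.inr hn))

theorem map_image_patLang_subset {f : N → N} (hf : Injective f) (φ : Fresh N k)
    (hφ : ∀ n ∈ φ.consts, f n = n) : List.map f '' patLang k φ ⊆ patLang k φ := by
  rintro _ ⟨_, ⟨x, rfl, hx⟩, rfl⟩
  exact ⟨f ∘ x, List.map_ofFn, (φ.sat_comp_iff hf hφ x).2 hx⟩

theorem perm_image_patLang (π : Equiv.Perm N) (φ : Fresh N k)
    (hπ : ∀ n ∈ φ.consts, π n = n) : List.map π '' patLang k φ = patLang k φ := by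
  have hπ_symm : ∀ n ∈ φ.consts, π.symm n = n := fun n hn =>
    π.symm_apply_eq.2 (hπ n hn).symm
  refine (map_image_patLang_subset π.injective φ hπ).antisymm fun w hw => ?_
  refine ⟨w.map π.symm, map_image_patLang_subset π.symm.injective φ hπ_symm ⟨w, hw, rfl⟩, ?_⟩
  simp

end

theorem iUnion_patLang_perm_invariant_general {N : Type}
    (F : Finset N) (k : ℕ → ℕ) (φ : (i : ℕ) → Fresh N (k i))
    (hF : ∀ i, (φ i).consts ⊆ ↑F)
    (π : Equiv.Perm N) (hπ : ∀ n ∈ F, π n = n) :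
    (fun w => w.map π) '' (⋃ i, patLang (k i) (φ i)) = ⋃ i, patLang (k i) (φ i) := by
  rw [Set.image_iUnion]
  exact Set.iUnion_congr fun i => perm_image_patLang π (φ i) fun n hn => hπ n (hF i hn)

theorem iUnion_patLang_perm_invariant {N : Type} [Countable N] [Infinite N]
    (F : Finset N) (k : ℕ → ℕ) (φ : (i : ℕ) → Fresh N (k i))
    (hF : ∀ i, (φ i).consts ⊆ ↑F)
    (π : Equiv.Perm N) (hπ : ∀ n ∈ F, π n = n) :
    (fun w => w.map π) '' (⋃ i, patLang (k i) (φ i)) = ⋃ i, patLang (k i) (φ i) :=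
  iUnion_patLang_perm_invariant_general F k φ hF π hπ
end

section
/- For a pattern language L = L(k, φ) over a countably infinite name alphabet N and any h : ℕ, the h-fold concatenation power L^h is a pattern language of length h·k (namely L(h·k, ψ_h) where ψ_h imposes φ on each of the h consecutive blocks of k positions). Consequently the Kleene star L∗ = ⋃_{h ∈ ℕ} L^h is a countable union of pattern languages. (This is the core correctness fact behind the language-calculus treatment of the Kleene star, which unfolds the star an arbitrary finite number of times.) -/
/-- `h`-fold concatenation power of a language. -/
def power {N : Type} (L : Set (List N)) : ℕ → Set (List N)
  | 0 => {[]}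
  | h + 1 => { w | ∃ u ∈ L, ∃ v ∈ power L h, w = u ++ v }

/-- Kleene star of a language. -/
def kstar {N : Type} (L : Set (List N)) : Set (List N) := ⋃ h, power L h

/-- The index of the `j`-th position of the `i`-th block of `k` consecutive
positions among `h * k` positions. -/
def blockIdx {h k : ℕ} (i : Fin h) (j : Fin k) : Fin (h * k) :=
  ⟨i.1 * k + j.1, by
    have hi := i.isLt
    have hj := j.isLt
    calc i.1 * k + j.1 < i.1 * k + k := by omega
      _ = (i.1 + 1) * k := by ring
      _ ≤ h * k := Nat.mul_le_mul_right k hi⟩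

/-
Freshness conditions can be pulled back along any map of positions, so the
concatenation of two pattern languages is again one: impose the first condition on
the first block of positions and the second on the rest. Unfolding
`L^(h+1) = L · L^h` then gives `L^h = L(h·k, ψ_h)` with `ψ_h` imposing `φ` on each
of the `h` blocks, and the star is the union of these.
-/

namespace Fresh

variable {N : Type}

def comap {k m : ℕ} (f : Fin k → Fin m) : Fresh N k → Fresh N m
  | .tru => .tru
  | .neVar i j => .neVar (f i) (f j)
  | .neConst i n => .neConst (f i) n
  | .and φ ψ => .and (φ.comap f) (ψ.comap f)
  | .or φ ψ => .or (φ.comap f) (ψ.comap f)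

theorem sat_comap {k m : ℕ} (f : Fin k → Fin m) (φ : Fresh N k) (x : Fin m → N) :
    (φ.comap f).sat x ↔ φ.sat (x ∘ f) := by
  induction φ <;> simp [comap, sat, *]

def append {k m : ℕ} (φ : Fresh N k) (ψ : Fresh N m) : Fresh N (k + m) :=
  .and (φ.comap (Fin.castAdd m)) (ψ.comap (Fin.natAdd k))

theorem sat_append {k m : ℕ} (φ : Fresh N k) (ψ : Fresh N m) (x : Fin (k + m) → N) :
    (φ.append ψ).sat x ↔ φ.sat (x ∘ Fin.castAdd m) ∧ ψ.sat (x ∘ Fin.natAdd k) := by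
  simp only [append, sat, sat_comap]

def blocks {k : ℕ} (φ : Fresh N k) : (h : ℕ) → Fresh N (h * k)
  | 0 => .tru
  | h + 1 => (φ.append (φ.blocks h)).comap (Fin.cast (by ring))

end Fresh

theorem blockIdx_zero {h k : ℕ} (j : Fin k) :
    blockIdx (0 : Fin (h + 1)) j = Fin.cast (by ring) (Fin.castAdd (h * k) j) := by
  ext; simp [blockIdx]

theorem blockIdx_succ {h k : ℕ} (i : Fin h) (j : Fin k) :
    blockIdx i.succ j = Fin.cast (by ring) (Fin.natAdd k (blockIdx i j)) := by
  ext; simp [blockIdx]; ring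

section

variable {N : Type}

theorem Fresh.sat_blocks {k : ℕ} (φ : Fresh N k) (h : ℕ) (x : Fin (h * k) → N) :
    (φ.blocks h).sat x ↔ ∀ i : Fin h, φ.sat fun j => x (blockIdx i j) := by
  induction h with
  | zero => simp [blocks, sat]
  | succ h ih =>
    simp only [blocks, sat_comap, sat_append, ih, Fin.forall_fin_succ, blockIdx_zero,
      blockIdx_succ]
    rfl

theorem patLang_append {k m : ℕ} (φ : Fresh N k) (ψ : Fresh N m) :
    patLang (k + m) (φ.append ψ) =
      { w | ∃ u ∈ patLang k φ, ∃ v ∈ patLang m ψ, w = u ++ v } := by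
  ext w
  simp only [patLang, Set.mem_ofPred_eq, Fresh.sat_append]
  constructor
  · rintro ⟨x, rfl, hφ, hψ⟩
    exact ⟨_, ⟨_, rfl, hφ⟩, _, ⟨_, rfl, hψ⟩, List.ofFn_add⟩
  · rintro ⟨_, ⟨y, rfl, hy⟩, _, ⟨z, rfl, hz⟩, rfl⟩
    refine ⟨Fin.append y z, ?_, ?_, ?_⟩
    · simp [List.ofFn_add]
    · simpa [Function.comp_def] using hy
    · simpa [Function.comp_def] using hz

theorem patLang_comap_cast {m n : ℕ} (e : m = n) (φ : Fresh N m) :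
    patLang n (φ.comap (Fin.cast e)) = patLang m φ := by
  subst e
  simp [patLang, Fresh.sat_comap]

theorem power_patLang {k : ℕ} (φ : Fresh N k) (h : ℕ) :
    power (patLang k φ) h = patLang (h * k) (φ.blocks h) := by
  induction h with
  | zero => ext w; simp [power, patLang, Fresh.blocks, Fresh.sat, Fin.isEmpty]
  | succ h ih => rw [power, Fresh.blocks, patLang_comap_cast, patLang_append, ih]

end

theorem power_patLang_and_star_general {N : Type}
    (k : ℕ) (φ : Fresh N k) :
    (∀ h : ℕ, ∃ ψ : Fresh N (h * k),
      (∀ x : Fin (h * k) → N,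
        ψ.sat x ↔ ∀ i : Fin h, φ.sat fun j => x (blockIdx i j)) ∧
      power (patLang k φ) h = patLang (h * k) ψ) ∧
    ∃ (m : ℕ → ℕ) (χ : (h : ℕ) → Fresh N (m h)),
      kstar (patLang k φ) = ⋃ h, patLang (m h) (χ h) :=
  ⟨fun h => ⟨φ.blocks h, φ.sat_blocks h, power_patLang φ h⟩,
    (· * k), φ.blocks, by simp only [kstar, power_patLang]⟩

theorem power_patLang_and_star {N : Type} [Countable N] [Infinite N]
    (k : ℕ) (φ : Fresh N k) :
    (∀ h : ℕ, ∃ ψ : Fresh N (h * k),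
      (∀ x : Fin (h * k) → N,
        ψ.sat x ↔ ∀ i : Fin h, φ.sat fun j => x (blockIdx i j)) ∧
      power (patLang k φ) h = patLang (h * k) ψ) ∧
    ∃ (m : ℕ → ℕ) (χ : (h : ℕ) → Fresh N (m h)),
      kstar (patLang k φ) = ⋃ h, patLang (m h) (χ h) :=
  power_patLang_and_star_general k φ
end

section
/- The language L_ths is equivariant: for every permutation π : Equiv.Perm N, the image of L_ths under the map sending a word w to w mapped symbolwise by Sum.map id π equals L_ths. -/
/-- The language `L_thr(r)`: unions over `h` of words
`v₀ d v₁ d ⋯ v_h d` where each block `v_j` uses only two distinct names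
`p ≠ p'`, both different from `r`. -/
def Lthr {S N : Type} (d : S) (r : N) : Set (List (S ⊕ N)) :=
  { w | ∃ (h : ℕ) (v : Fin (h + 1) → List (S ⊕ N)),
      (∀ j, ∃ p p' : N, p ≠ p' ∧ p ≠ r ∧ p' ≠ r ∧
        ∀ x ∈ v j, x = Sum.inr p ∨ x = Sum.inr p') ∧
      w = (List.ofFn fun j : Fin (h + 1) => v j ++ [Sum.inl d]).flatten }

/-- The language `L_ths`: words `a b r₀ w₀ r₀ ⋯ r_k w_k r_k` where each
`wᵢ ∈ L_thr(rᵢ)` and `rᵢ` does not occur in the earlier part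
`r₀ w₀ r₀ ⋯ r_{i−1} w_{i−1} r_{i−1}` (relative global freshness). -/
def Lths {S N : Type} (a b d : S) : Set (List (S ⊕ N)) :=
  { w | ∃ (k : ℕ) (r : Fin (k + 1) → N) (wv : Fin (k + 1) → List (S ⊕ N)),
      (∀ i, wv i ∈ Lthr d (r i)) ∧
      (∀ i : Fin (k + 1),
        Sum.inr (r i) ∉
          (List.ofFn fun j : Fin (k + 1) =>
            if j < i then [Sum.inr (r j)] ++ wv j ++ [Sum.inr (r j)]
            else ([] : List (S ⊕ N))).flatten) ∧
      w = [Sum.inl a, Sum.inl b] ++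
        (List.ofFn fun i : Fin (k + 1) =>
          [Sum.inr (r i)] ++ wv i ++ [Sum.inr (r i)]).flatten }

/-! Renaming by `π` is injective on symbols, so it preserves distinctness of names and
freshness, and it commutes with the block concatenations defining both languages;
the image of `L_ths` under `π⁻¹` then gives the reverse inclusion. -/

section

variable {S N : Type}

lemma Lthr_mapsTo (d : S) (r : N) (π : Equiv.Perm N) :
    Set.MapsTo (List.map (Sum.map id π)) (Lthr d r) (Lthr d (π r)) := by
  rintro _ ⟨h, v, hv, rfl⟩
  refine ⟨h, fun j => (v j).map (Sum.map id π), fun j => ?_, ?_⟩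
  · obtain ⟨p, p', hpp', hpr, hp'r, hv⟩ := hv j
    refine ⟨π p, π p', π.injective.ne hpp', π.injective.ne hpr, π.injective.ne hp'r, ?_⟩
    simp only [List.mem_map, forall_exists_index, and_imp, forall_apply_eq_imp_iff₂]
    intro x hx
    rcases hv x hx with rfl | rfl <;> simp
  · simp [List.map_flatten, List.map_ofFn, Function.comp_def]

lemma Lths_mapsTo (a b d : S) (π : Equiv.Perm N) :
    Set.MapsTo (List.map (Sum.map id π)) (Lths a b d) (Lths a b d) := by
  rintro _ ⟨k, r, wv, hwv, hfresh, rfl⟩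
  refine ⟨k, fun i => π (r i), fun i => (wv i).map (Sum.map id π),
    fun i => Lthr_mapsTo d (r i) π (hwv i), fun i hi => hfresh i ?_, ?_⟩
  · rw [← List.mem_map_of_injective (Sum.map_injective.2 ⟨Function.injective_id, π.injective⟩)]
    simpa only [List.map_flatten, List.map_ofFn, Function.comp_def, apply_ite (List.map _),
      List.map_append, List.map_cons, List.map_nil, Sum.map_inr] using hi
  · simp [List.map_flatten, List.map_ofFn, Function.comp_def]

end

theorem Lths_equivariant_general {S N : Type}
    (a b d : S) (π : Equiv.Perm N) :
    (fun w : List (S ⊕ N) => w.map (Sum.map id π)) '' Lths a b d = Lths a b d := by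
  have hinv : Set.RightInvOn (List.map (Sum.map id ⇑π⁻¹)) (List.map (Sum.map id π))
      (Lths a b d) := fun w _ => by
    simp only [List.map_map, Sum.map_comp_map, Function.comp_id, ← Equiv.Perm.coe_mul,
      mul_inv_cancel, Equiv.Perm.coe_one, Sum.map_id_id, List.map_id]
  exact (hinv.surjOn (Lths_mapsTo a b d π⁻¹)).image_eq_of_mapsTo (Lths_mapsTo a b d π)

theorem Lths_equivariant {S N : Type} [Countable N] [Infinite N]
    (a b d : S) (hab : a ≠ b) (π : Equiv.Perm N) :
    (fun w : List (S ⊕ N) => w.map (Sum.map id π)) '' Lths a b d = Lths a b d :=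
  Lths_equivariant_general a b d π
end
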